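/- Let a < b be real numbers and let f : ℝ → ℝ be continuously differentiable on [a,b] with Lipschitz continuous derivative on [a,b], so that the convex envelope E := conv_{[a,b]} f is differentiable on [a,b]. Suppose the set {τ ∈ [a,b] : E′(τ) ≥ 0} is nonempty and let τ₀ be its minimum. Then the monotone convex envelope of f on [a,b] satisfies: monconv_{[a,b]} f(τ) = E(τ) for every τ ∈ [τ₀, b], and monconv_{[a,b]} f(τ) = E(τ₀) for every τ ∈ [a, τ₀]. -/

import Mathlib

/-- The convex envelope of `f` on the interval `[a,b]`:
`conv_{[a,b]} f (τ) = sup { g τ : g convex on [a,b], g ≤ f on [a,b] }`. -/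
noncomputable def convEnv (a b : ℝ) (f : ℝ → ℝ) (τ : ℝ) : ℝ :=
  sSup {y : ℝ | ∃ g : ℝ → ℝ, ConvexOn ℝ (Set.Icc a b) g ∧
    (∀ z ∈ Set.Icc a b, g z ≤ f z) ∧ g τ = y}

/-- The monotone convex envelope of `f` on the interval `[a,b]`:
`monconv_{[a,b]} f (τ) = sup { g τ : g convex and nondecreasing on [a,b], g ≤ f }`. -/
noncomputable def monConvEnv (a b : ℝ) (f : ℝ → ℝ) (τ : ℝ) : ℝ :=
  sSup {y : ℝ | ∃ g : ℝ → ℝ, ConvexOn ℝ (Set.Icc a b) g ∧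
    MonotoneOn g (Set.Icc a b) ∧ (∀ z ∈ Set.Icc a b, g z ≤ f z) ∧ g τ = y}

/-!
On `[τ₀, b]` the convex envelope `E` is nondecreasing (by convexity, since `E'(τ₀) ≥ 0`),
and on `[a, τ₀]` it is nonincreasing (its derivative is negative there). Hence
`τ ↦ E (max τ τ₀)` is a convex, nondecreasing minorant of `f`, which gives the lower bounds.
Conversely, a nondecreasing convex minorant `g` satisfies `g τ ≤ g σ ≤ E σ` for all `τ ≤ σ`,
which gives the upper bounds.
-/

open Set

lemma antitoneOn_of_hasDerivWithinAt_nonpos_of_subset {S D : Set ℝ} {f f' : ℝ → ℝ}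
    (hD : Convex ℝ D) (hDS : D ⊆ S) (hf : ∀ x ∈ S, HasDerivWithinAt f (f' x) S x)
    (hf'₀ : ∀ x ∈ interior D, f' x ≤ 0) : AntitoneOn f D :=
  antitoneOn_of_hasDerivWithinAt_nonpos hD
    (fun x hx => ((hf x (hDS hx)).continuousWithinAt).mono hDS)
    (fun x hx => (hf x (hDS (interior_subset hx))).mono (interior_subset.trans hDS)) hf'₀

lemma ConvexOn.monotoneOn_of_hasDerivWithinAt_nonneg {S : Set ℝ} {E : ℝ → ℝ} {x₀ e : ℝ}
    (hE : ConvexOn ℝ S E) (hx₀ : x₀ ∈ S) (hd : HasDerivWithinAt E e S x₀) (he : 0 ≤ e) :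
    MonotoneOn E (S ∩ Ici x₀) := by
  intro x hx y hy hxy
  rcases hxy.eq_or_lt with rfl | hxy
  · exact le_rfl
  have hx₀y : x₀ < y := hx.2.trans_lt hxy
  have h₀ : 0 ≤ slope E x₀ y := he.trans (hE.le_slope_of_hasDerivWithinAt hx₀ hy.1 hx₀y hd)
  have hslope : slope E x₀ y ≤ slope E x y := by
    rw [slope_comm E x₀, slope_comm E x]
    exact hE.slope_mono hy.1 ⟨hx₀, hx₀y.ne⟩ ⟨hx.1, hxy.ne⟩ hx.2
  exact (slope_nonneg_iff_of_le hxy.le).1 (h₀.trans hslope)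

lemma ConvexOn.comp_max_const {E : ℝ → ℝ} {a b c : ℝ} (hE : ConvexOn ℝ (Icc a b) E)
    (hmono : MonotoneOn E (Icc c b)) (hc : c ∈ Icc a b) :
    ConvexOn ℝ (Icc a b) (fun x => E (max x c)) := by
  have himage : (fun x => max x c) '' Icc a b = Icc c b := by
    ext y
    constructor
    · rintro ⟨x, hx, rfl⟩
      exact ⟨le_max_right x c, max_le hx.2 hc.2⟩
    · intro hy
      exact ⟨y, ⟨hc.1.trans hy.1, hy.2⟩, max_eq_left hy.1⟩
  refine ConvexOn.comp (g := E) (f := fun x => max x c) ?_ ?_ ?_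
  · rw [himage]
    exact hE.subset (Icc_subset_Icc hc.1 le_rfl) (convex_Icc c b)
  · exact (convexOn_id (convex_Icc a b)).sup (convexOn_const c (convex_Icc a b))
  · rwa [himage]

section Envelopes

variable {a b : ℝ} {f g : ℝ → ℝ} {τ σ y : ℝ}

lemma le_convEnv (hg : ConvexOn ℝ (Icc a b) g) (hgf : ∀ z ∈ Icc a b, g z ≤ f z)
    (hτ : τ ∈ Icc a b) : g τ ≤ convEnv a b f τ :=
  le_csSup ⟨f τ, by rintro _ ⟨g, -, hgf, rfl⟩; exact hgf τ hτ⟩ ⟨g, hg, hgf, rfl⟩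

lemma le_monConvEnv (hg : ConvexOn ℝ (Icc a b) g) (hgm : MonotoneOn g (Icc a b))
    (hgf : ∀ z ∈ Icc a b, g z ≤ f z) (hτ : τ ∈ Icc a b) : g τ ≤ monConvEnv a b f τ :=
  le_csSup ⟨f τ, by rintro _ ⟨g, -, -, hgf, rfl⟩; exact hgf τ hτ⟩ ⟨g, hg, hgm, hgf, rfl⟩

/-- A lower bound `c` of `f` is a constant minorant, so the supremum is over a nonempty set. -/
lemma convEnv_le (hf : BddBelow (f '' Icc a b))
    (h : ∀ g, ConvexOn ℝ (Icc a b) g → (∀ z ∈ Icc a b, g z ≤ f z) → g τ ≤ y) :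
    convEnv a b f τ ≤ y := by
  obtain ⟨c, hc⟩ := hf
  refine csSup_le ⟨c, fun _ => c, convexOn_const c (convex_Icc a b),
    fun z hz => hc ⟨z, hz, rfl⟩, rfl⟩ ?_
  rintro _ ⟨g, hg, hgf, rfl⟩
  exact h g hg hgf

lemma monConvEnv_le (hf : BddBelow (f '' Icc a b))
    (h : ∀ g, ConvexOn ℝ (Icc a b) g → MonotoneOn g (Icc a b) →
      (∀ z ∈ Icc a b, g z ≤ f z) → g τ ≤ y) :
    monConvEnv a b f τ ≤ y := by
  obtain ⟨c, hc⟩ := hf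
  refine csSup_le ⟨c, fun _ => c, convexOn_const c (convex_Icc a b),
    monotoneOn_const, fun z hz => hc ⟨z, hz, rfl⟩, rfl⟩ ?_
  rintro _ ⟨g, hg, hgm, hgf, rfl⟩
  exact h g hg hgm hgf

lemma convEnv_le_self (hf : BddBelow (f '' Icc a b)) (hτ : τ ∈ Icc a b) :
    convEnv a b f τ ≤ f τ :=
  convEnv_le hf fun _ _ hgf => hgf τ hτ

lemma convexOn_convEnv (hf : BddBelow (f '' Icc a b)) :
    ConvexOn ℝ (Icc a b) (convEnv a b f) := by
  refine ⟨convex_Icc a b, fun x hx z hz p q hp hq hpq => convEnv_le hf fun g hg hgf => ?_⟩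
  calc g (p • x + q • z) ≤ p • g x + q • g z := hg.2 hx hz hp hq hpq
    _ ≤ p • convEnv a b f x + q • convEnv a b f z := by
      gcongr
      · exact le_convEnv hg hgf hx
      · exact le_convEnv hg hgf hz

lemma monConvEnv_le_convEnv_of_le (hf : BddBelow (f '' Icc a b)) (hτ : a ≤ τ)
    (hσ : σ ∈ Icc a b) (hτσ : τ ≤ σ) : monConvEnv a b f τ ≤ convEnv a b f σ :=
  monConvEnv_le hf fun _ hg hgm hgf =>
    (hgm ⟨hτ, hτσ.trans hσ.2⟩ hσ hτσ).trans (le_convEnv hg hgf hσ)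

lemma convEnv_max_le_monConvEnv (hf : BddBelow (f '' Icc a b)) {τ₀ : ℝ} (hτ₀ : τ₀ ∈ Icc a b)
    (hanti : AntitoneOn (convEnv a b f) (Icc a τ₀))
    (hmono : MonotoneOn (convEnv a b f) (Icc τ₀ b)) (hτ : τ ∈ Icc a b) :
    convEnv a b f (max τ τ₀) ≤ monConvEnv a b f τ := by
  have hmax : ∀ x ∈ Icc a b, max x τ₀ ∈ Icc τ₀ b :=
    fun x hx => ⟨le_max_right x τ₀, max_le hx.2 hτ₀.2⟩
  refine le_monConvEnv ((convexOn_convEnv hf).comp_max_const hmono hτ₀)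
    (fun x hx y hy hxy => hmono (hmax x hx) (hmax y hy) (max_le_max hxy le_rfl)) ?_ hτ
  intro z hz
  rcases le_total τ₀ z with hzτ₀ | hzτ₀
  · rw [max_eq_left hzτ₀]
    exact convEnv_le_self hf hz
  · rw [max_eq_right hzτ₀]
    exact (hanti ⟨hz.1, hzτ₀⟩ ⟨hτ₀.1, le_rfl⟩ hzτ₀).trans (convEnv_le_self hf hz)

end Envelopes

theorem monConvEnv_eq_convEnv_general (a b : ℝ)
    (f f' : ℝ → ℝ)
    (hf' : ∀ τ ∈ Set.Icc a b, HasDerivWithinAt f (f' τ) (Set.Icc a b) τ)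
    (E' : ℝ → ℝ)
    (hE' : ∀ τ ∈ Set.Icc a b, HasDerivWithinAt (convEnv a b f) (E' τ) (Set.Icc a b) τ)
    (τ₀ : ℝ)
    (hτ₀ : IsLeast {τ ∈ Set.Icc a b | 0 ≤ E' τ} τ₀) :
    (∀ τ ∈ Set.Icc τ₀ b, monConvEnv a b f τ = convEnv a b f τ) ∧
    (∀ τ ∈ Set.Icc a τ₀, monConvEnv a b f τ = convEnv a b f τ₀) := by
  obtain ⟨⟨hτ₀ab, hE'τ₀⟩, hτ₀least⟩ := hτ₀
  have hf : BddBelow (f '' Icc a b) :=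
    isCompact_Icc.bddBelow_image fun τ hτ => (hf' τ hτ).continuousWithinAt
  have hE'_nonpos : ∀ x ∈ Ico a τ₀, E' x ≤ 0 := fun x hx =>
    le_of_not_ge fun h => hx.2.not_ge (hτ₀least ⟨⟨hx.1, hx.2.le.trans hτ₀ab.2⟩, h⟩)
  have hanti : AntitoneOn (convEnv a b f) (Icc a τ₀) :=
    antitoneOn_of_hasDerivWithinAt_nonpos_of_subset (convex_Icc a τ₀)
      (Icc_subset_Icc le_rfl hτ₀ab.2) hE' fun x hx =>
        hE'_nonpos x (Ioo_subset_Ico_self (interior_Icc (a := a) ▸ hx))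
  have hmono : MonotoneOn (convEnv a b f) (Icc τ₀ b) :=
    ((convexOn_convEnv hf).monotoneOn_of_hasDerivWithinAt_nonneg hτ₀ab (hE' τ₀ hτ₀ab)
      hE'τ₀).mono fun x hx => ⟨⟨hτ₀ab.1.trans hx.1, hx.2⟩, hx.1⟩
  have hlower : ∀ τ ∈ Icc a b, convEnv a b f (max τ τ₀) ≤ monConvEnv a b f τ :=
    fun _ hτ => convEnv_max_le_monConvEnv hf hτ₀ab hanti hmono hτ
  constructor
  · intro τ hτ
    have hτab : τ ∈ Icc a b := ⟨hτ₀ab.1.trans hτ.1, hτ.2⟩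
    refine (monConvEnv_le_convEnv_of_le hf hτab.1 hτab le_rfl).antisymm ?_
    simpa only [max_eq_left hτ.1] using hlower τ hτab
  · intro τ hτ
    refine (monConvEnv_le_convEnv_of_le hf hτ.1 hτ₀ab hτ.2).antisymm ?_
    simpa only [max_eq_right hτ.2] using hlower τ ⟨hτ.1, hτ.2.trans hτ₀ab.2⟩

/-- formula (e:mon) in Step 5 of the proof of Lemma 3.2. Let `f` be
`C^{1,1}` on `[a,b]`, let `E = conv_{[a,b]} f` with derivative `E'` on `[a,b]`, and let
`τ₀` be the minimum of the nonempty set `{τ ∈ [a,b] : E′(τ) ≥ 0}`. Then the monotone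
convex envelope of `f` equals `E` on `[τ₀, b]` and is constantly `E(τ₀)` on `[a, τ₀]`. -/
theorem monConvEnv_eq_convEnv (a b : ℝ) (hab : a < b) (L : ℝ) (hL : 0 < L)
    (f f' : ℝ → ℝ)
    (hf' : ∀ τ ∈ Set.Icc a b, HasDerivWithinAt f (f' τ) (Set.Icc a b) τ)
    (hlip : LipschitzOnWith (Real.toNNReal L) f' (Set.Icc a b))
    (E' : ℝ → ℝ)
    (hE' : ∀ τ ∈ Set.Icc a b, HasDerivWithinAt (convEnv a b f) (E' τ) (Set.Icc a b) τ)
    (τ₀ : ℝ)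
    (hτ₀ : IsLeast {τ ∈ Set.Icc a b | 0 ≤ E' τ} τ₀) :
    (∀ τ ∈ Set.Icc τ₀ b, monConvEnv a b f τ = convEnv a b f τ) ∧
    (∀ τ ∈ Set.Icc a τ₀, monConvEnv a b f τ = convEnv a b f τ₀) :=
  monConvEnv_eq_convEnv_general a b f f' hf' E' hE' τ₀ hτ₀
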